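/- Let (p̄_l, q̄_l), l ≥ 1, be coprime positive integers, Q̄_l = q̄_1⋯q̄_l, and define β̄_0 = 1, β̄_1 = p̄_1/q̄_1, β̄_{l+1} = q̄_l β̄_l + (1/Q̄_l)·(p̄_{l+1}/q̄_{l+1}). Then for all l ≥ 1: (i) gcd(β̄_0,…,β̄_l) = 1/Q̄_l and the subgroup ⟨β̄_0,…,β̄_l⟩ of ℚ equals (1/Q̄_l)ℤ; (ii) q̄_{l+1} β̄_{l+1} > β̄_{l+1} > q̄_l β̄_l whenever q̄_{l+1} > 1. -/

import Mathlib

/-! Modulo `(1/Q̄_l)ℤ` the recursion reads `β̄_{l+1} ≡ (1/Q̄_l)(p̄_{l+1}/q̄_{l+1})`, and adjoining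
`x p/q` to `ℤx` with `p, q` coprime gives `ℤ(x/q)` by Bézout; so by induction `β̄_0, …, β̄_l`
generate `(1/Q̄_l)ℤ`, and a positive generator of that group is the greatest common
`ℤ`-divisor. Part (ii) holds because the increment `(1/Q̄_l)(p̄_{l+1}/q̄_{l+1})` and all `β̄_l`
are positive. -/

namespace AddSubgroup

theorem sup_zmultiples_eq_of_sub_mem {G : Type*} [AddGroup G] {H : AddSubgroup G} {y z : G}
    (h : y - z ∈ H) : H ⊔ zmultiples y = H ⊔ zmultiples z := by
  have hyz : y = (y - z) + z := (sub_add_cancel y z).symm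
  have hzy : z = -(y - z) + y := by rw [neg_sub, sub_add_cancel]
  apply le_antisymm <;> refine sup_le le_sup_left (zmultiples_le.mpr ?_)
  · rw [hyz]
    exact add_mem (mem_sup_left h) (mem_sup_right (mem_zmultiples z))
  · rw [hzy]
    exact add_mem (mem_sup_left (neg_mem h)) (mem_sup_right (mem_zmultiples y))

theorem zmultiples_sup_zmultiples_mul_div_of_coprime {K : Type*} [Field K] [CharZero K]
    (x : K) {p q : ℕ} (hq : q ≠ 0) (hpq : p.Coprime q) :
    zmultiples x ⊔ zmultiples (x * (p / q)) = zmultiples (x / q) := by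
  have hqK : (q : K) ≠ 0 := Nat.cast_ne_zero.mpr hq
  apply le_antisymm
  · refine sup_le (zmultiples_le.mpr ⟨q, ?_⟩) (zmultiples_le.mpr ⟨p, ?_⟩)
    · simp only [natCast_zsmul, nsmul_eq_mul]
      field_simp
    · simp only [natCast_zsmul, nsmul_eq_mul]
      ring
  · obtain ⟨a, b, hab⟩ := Nat.isCoprime_iff_coprime.mpr hpq
    have habK : (a : K) * p + b * q = 1 := by exact_mod_cast hab
    have hx : x / q = b • x + a • (x * (p / q)) := by
      simp only [zsmul_eq_mul]
      field_simp
      linear_combination (-x) * habK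
    rw [zmultiples_le, hx]
    exact add_mem (zsmul_mem (mem_sup_left (mem_zmultiples x)) b)
      (zsmul_mem (mem_sup_right (mem_zmultiples _)) a)

theorem closure_image_setOf_le_succ {G : Type*} [AddGroup G] (f : ℕ → G) (n : ℕ) :
    closure (f '' {j | j ≤ n + 1}) = closure (f '' {j | j ≤ n}) ⊔ zmultiples (f (n + 1)) := by
  have h : {j | j ≤ n + 1} = insert (n + 1) {j | j ≤ n} := by
    ext j
    simp only [Set.mem_ofPred_eq, Set.mem_insert_iff]
    omega
  rw [h, Set.image_insert_eq, ← Set.singleton_union, closure_union, sup_comm,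
    zmultiples_eq_closure]

end AddSubgroup

open AddSubgroup

theorem isGreatest_intMul_of_closure_eq_zmultiples {K ι : Type*} [Field K] [LinearOrder K]
    [IsStrictOrderedRing K] (f : ι → K) (s : Set ι) {d : K} (hd : 0 < d)
    (h : AddSubgroup.closure (f '' s) = zmultiples d) :
    IsGreatest {g : K | ∀ i ∈ s, ∃ n : ℤ, f i = n * g} d := by
  refine ⟨fun i hi => ?_, fun g hg => ?_⟩
  · have hfi : f i ∈ zmultiples d := h ▸ subset_closure (Set.mem_image_of_mem f hi)
    obtain ⟨n, hn⟩ := mem_zmultiples_iff.mp hfi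
    exact ⟨n, by rw [← hn, zsmul_eq_mul]⟩
  · have hle : AddSubgroup.closure (f '' s) ≤ zmultiples g := by
      rw [closure_le]
      rintro _ ⟨i, hi, rfl⟩
      obtain ⟨n, hn⟩ := hg i hi
      exact mem_zmultiples_iff.mpr ⟨n, by rw [zsmul_eq_mul, hn]⟩
    obtain ⟨m, hm⟩ := mem_zmultiples_iff.mp (hle (h ▸ mem_zmultiples d))
    rw [zsmul_eq_mul] at hm
    rcases le_or_gt g 0 with hg0 | hg0
    · exact hg0.trans hd.le
    · have hm0 : (0 : ℤ) < m := Int.cast_pos.mp (pos_of_mul_pos_left (hm ▸ hd) hg0.le)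
      have hm1 : (1 : K) ≤ m := by exact_mod_cast hm0
      exact (le_mul_of_one_le_left hg0.le hm1).trans_eq hm

section JValues

variable {p q : ℕ → ℕ} {β : ℕ → ℚ}

theorem closure_jvalues_eq_zmultiples (hq : ∀ i, 1 ≤ i → 0 < q i)
    (hcop : ∀ i, 1 ≤ i → Nat.Coprime (p i) (q i))
    (hβ0 : β 0 = 1) (hβ1 : β 1 = (p 1 : ℚ) / (q 1 : ℚ))
    (hβ : ∀ i, 1 ≤ i →
      β (i + 1) = (q i : ℚ) * β i
        + (1 / ∏ j ∈ Finset.Icc 1 i, (q j : ℚ)) * ((p (i + 1) : ℚ) / (q (i + 1) : ℚ)))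
    (l : ℕ) :
    AddSubgroup.closure (β '' {j | j ≤ l}) = zmultiples (1 / ∏ j ∈ Finset.Icc 1 l, (q j : ℚ)) := by
  induction l with
  | zero =>
    have h : {j | j ≤ 0} = ({0} : Set ℕ) := by ext; simp
    rw [h, Set.image_singleton, ← zmultiples_eq_closure, hβ0]
    simp
  | succ n ih =>
    set Q := ∏ j ∈ Finset.Icc 1 n, (q j : ℚ)
    have hshift : β (n + 1) - 1 / Q * (p (n + 1) / q (n + 1)) ∈ zmultiples (1 / Q) := by
      rcases Nat.eq_zero_or_pos n with rfl | hn
      · simp [Q, hβ1]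
      · rw [hβ n hn, add_sub_cancel_right, ← nsmul_eq_mul, ← ih]
        exact nsmul_mem (AddSubgroup.subset_closure (Set.mem_image_of_mem β (by simp))) _
    rw [closure_image_setOf_le_succ, ih, sup_zmultiples_eq_of_sub_mem hshift,
      zmultiples_sup_zmultiples_mul_div_of_coprime _ (hq _ n.succ_pos).ne' (hcop _ n.succ_pos),
      Finset.prod_Icc_succ_top n.succ_pos, div_div]

theorem prod_Icc_cast_pos (hq : ∀ i, 1 ≤ i → 0 < q i) (n : ℕ) :
    0 < ∏ j ∈ Finset.Icc 1 n, (q j : ℚ) :=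
  Finset.prod_pos fun j hj => Nat.cast_pos.mpr (hq j (Finset.mem_Icc.mp hj).1)

theorem one_div_prod_mul_div_pos (hp : ∀ i, 1 ≤ i → 0 < p i) (hq : ∀ i, 1 ≤ i → 0 < q i)
    (n : ℕ) :
    0 < (1 / ∏ j ∈ Finset.Icc 1 n, (q j : ℚ)) * ((p (n + 1) : ℚ) / (q (n + 1) : ℚ)) := by
  have hQ := prod_Icc_cast_pos hq n
  have hpn : (0 : ℚ) < p (n + 1) := Nat.cast_pos.mpr (hp _ n.succ_pos)
  have hqn : (0 : ℚ) < q (n + 1) := Nat.cast_pos.mpr (hq _ n.succ_pos)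
  positivity

theorem jvalue_pos (hp : ∀ i, 1 ≤ i → 0 < p i) (hq : ∀ i, 1 ≤ i → 0 < q i)
    (hβ0 : β 0 = 1) (hβ1 : β 1 = (p 1 : ℚ) / (q 1 : ℚ))
    (hβ : ∀ i, 1 ≤ i →
      β (i + 1) = (q i : ℚ) * β i
        + (1 / ∏ j ∈ Finset.Icc 1 i, (q j : ℚ)) * ((p (i + 1) : ℚ) / (q (i + 1) : ℚ)))
    (l : ℕ) : 0 < β l := by
  induction l with
  | zero => simp [hβ0]
  | succ n ih =>
    rcases Nat.eq_zero_or_pos n with rfl | hn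
    · simpa [hβ1] using one_div_prod_mul_div_pos hp hq 0
    · rw [hβ n hn]
      exact add_pos (mul_pos (Nat.cast_pos.mpr (hq n hn)) ih) (one_div_prod_mul_div_pos hp hq n)

end JValues

/-- For the independent j-values `β̄_l`: (i) the gcd of `β̄_0, …, β̄_l` is `1/Q̄_l`
and the subgroup they generate is `(1/Q̄_l)ℤ`; (ii) whenever `q̄_{l+1} > 1`,
`q̄_{l+1} β̄_{l+1} > β̄_{l+1} > q̄_l β̄_l`. -/
theorem independent_jvalues_properties (p q : ℕ → ℕ) (β : ℕ → ℚ)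
    (hp : ∀ i, 1 ≤ i → 0 < p i) (hq : ∀ i, 1 ≤ i → 0 < q i)
    (hcop : ∀ i, 1 ≤ i → Nat.Coprime (p i) (q i))
    (hβ0 : β 0 = 1) (hβ1 : β 1 = (p 1 : ℚ) / (q 1 : ℚ))
    (hβ : ∀ i, 1 ≤ i →
      β (i + 1) = (q i : ℚ) * β i
        + (1 / ∏ j ∈ Finset.Icc 1 i, (q j : ℚ)) * ((p (i + 1) : ℚ) / (q (i + 1) : ℚ)))
    (l : ℕ) (hl : 1 ≤ l) :
    IsGreatest {g : ℚ | ∀ j ≤ l, ∃ n : ℤ, β j = (n : ℚ) * g}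
      (1 / ∏ j ∈ Finset.Icc 1 l, (q j : ℚ)) ∧
    (AddSubgroup.closure (β '' {j | j ≤ l}) : Set ℚ)
      = {x : ℚ | ∃ n : ℤ, x = (n : ℚ) * (1 / ∏ j ∈ Finset.Icc 1 l, (q j : ℚ))} ∧
    (1 < q (l + 1) →
      β (l + 1) < (q (l + 1) : ℚ) * β (l + 1) ∧ (q l : ℚ) * β l < β (l + 1)) := by
  have hclosure := closure_jvalues_eq_zmultiples hq hcop hβ0 hβ1 hβ l
  refine ⟨isGreatest_intMul_of_closure_eq_zmultiples β _
    (one_div_pos.mpr (prod_Icc_cast_pos hq l)) hclosure, ?_, ?_⟩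
  · rw [hclosure]
    ext x
    simp [mem_zmultiples_iff, eq_comm]
  · intro hq1
    refine ⟨lt_mul_of_one_lt_left (jvalue_pos hp hq hβ0 hβ1 hβ _) (by exact_mod_cast hq1), ?_⟩
    rw [hβ l hl, lt_add_iff_pos_right]
    exact one_div_prod_mul_div_pos hp hq l
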